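/- The SLSHT distribution component of a band-limited signal f is a finite linear combination of the signal's spectral coefficients: g_f(ŷ; n) = Σ_c f_c ψ_{n,c}(ŷ), where ψ_{n,c}(ŷ) = Σ_{r=0}^{N_h} √(4π/(2p+1)) conj(Y_p^q(ŷ)) h_p^0 T(c; r; n) with (p,q) ↔ r; in particular, each g_f(·; n) is band-limited with maximum spectral degree L_h, the band-limit of the window h. -/

import Mathlib

/-!
Both claims come from pulling finite sums out of the iterated integral defining a spherical
harmonic coefficient (legitimate since every term is continuous). Expanding window and signal, the
coefficient of their product is the double sum of triple products. As a function of the window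
position, `g_f(·; n)` is then a combination of the `conj Y_r` with `deg r ≤ L_h`, and the
coefficient of `conj (Y_l^m)` in degree `p > l` vanishes: the azimuthal integral forces `q = -m`,
and the polar integral, after substituting `x = cos θ`, is the orthogonality of associated Legendre
functions of equal order. That follows from Rodrigues' formula by integrating by parts `p + m`
times onto the other factor, a polynomial of degree `≤ l + m`.
-/

open Real MeasureTheory intervalIntegral ComplexConjugate

noncomputable section

/-- Associated Legendre function `P_ℓ^m` for nonnegative order `m`. -/
def assocLegendrePos (l m : ℕ) (x : ℝ) : ℝ :=
  ((-1 : ℝ) ^ m / ((2 : ℝ) ^ l * (Nat.factorial l : ℝ))) *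
    (1 - x ^ 2) ^ ((m : ℝ) / 2) *
    iteratedDeriv (l + m) (fun t : ℝ => (t ^ 2 - 1) ^ l) x

/-- Associated Legendre function `P_ℓ^m` for integer order `m`. -/
def assocLegendre (l : ℕ) (m : ℤ) (x : ℝ) : ℝ :=
  if 0 ≤ m then assocLegendrePos l m.toNat x
  else ((-1 : ℝ) ^ (-m).toNat *
    ((Nat.factorial (l - (-m).toNat) : ℝ) / (Nat.factorial (l + (-m).toNat) : ℝ))) *
    assocLegendrePos l (-m).toNat x

/-- Spherical harmonic normalization factor `N_ℓ^m`. -/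
def shNorm (l : ℕ) (m : ℤ) : ℝ :=
  Real.sqrt ((2 * l + 1) / (4 * π) *
    ((Nat.factorial ((l : ℤ) - m).toNat : ℝ) / (Nat.factorial ((l : ℤ) + m).toNat : ℝ)))

/-- Spherical harmonic `Y_ℓ^m(θ, φ)`. -/
def sphHarm (l : ℕ) (m : ℤ) (θ φ : ℝ) : ℂ :=
  ((shNorm l m * assocLegendre l m (Real.cos θ) : ℝ) : ℂ) *
    Complex.exp (Complex.I * (m : ℂ) * (φ : ℂ))

/-- Spherical harmonic coefficient `⟨f, Y_ℓ^m⟩ = ∫_{S²} f conj(Y_ℓ^m) ds`. -/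
def shc (f : ℝ → ℝ → ℂ) (l : ℕ) (m : ℤ) : ℂ :=
  ∫ θ in (0 : ℝ)..π,
    (∫ φ in (0 : ℝ)..(2 * π), f θ φ * conj (sphHarm l m θ φ)) * ((Real.sin θ : ℝ) : ℂ)

/-- Degree `ℓ = ⌊√n⌋` of the single index `n`. -/
def deg (n : ℕ) : ℕ := Nat.sqrt n

/-- Order `m = n − ⌊√n⌋² − ⌊√n⌋` of the single index `n`. -/
def ord (n : ℕ) : ℤ := (n : ℤ) - (Nat.sqrt n : ℤ) ^ 2 - (Nat.sqrt n : ℤ)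

/-- Spherical harmonic `Y_n` under the index bijection `n = ℓ² + ℓ + m`. -/
def sphHarmIdx (n : ℕ) (θ φ : ℝ) : ℂ := sphHarm (deg n) (ord n) θ φ

/-- Spherical harmonic triple product `T(c; r; n) = ∫ Y_c Y_r conj(Y_n) ds`. -/
def tripleProd (c r n : ℕ) : ℂ :=
  shc (fun θ φ => sphHarmIdx r θ φ * sphHarmIdx c θ φ) (deg n) (ord n)

open Polynomial

theorem Polynomial.iteratedDeriv_eval (P : ℝ[X]) (n : ℕ) :
    iteratedDeriv n (fun x => P.eval x) = fun x => (derivative^[n] P).eval x := by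
  induction n with
  | zero => simp
  | succ k ih =>
    rw [iteratedDeriv_succ, ih, Function.iterate_succ_apply']
    funext x
    exact Polynomial.deriv _

theorem assocLegendrePos_eq_eval (l m : ℕ) (x : ℝ) :
    assocLegendrePos l m x = (-1 : ℝ) ^ m / (2 ^ l * (l.factorial : ℝ)) *
      (1 - x ^ 2) ^ ((m : ℝ) / 2) * (derivative^[l + m] ((X ^ 2 - 1 : ℝ[X]) ^ l)).eval x := by
  have hpoly : (fun t : ℝ => (t ^ 2 - 1) ^ l) = fun t => ((X ^ 2 - 1 : ℝ[X]) ^ l).eval t := by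
    simp
  rw [assocLegendrePos, hpoly, Polynomial.iteratedDeriv_eval]

theorem natDegree_X_sq_sub_one_pow (l : ℕ) : ((X ^ 2 - 1 : ℝ[X]) ^ l).natDegree = 2 * l := by
  rw [natDegree_pow, ← C_1, natDegree_X_pow_sub_C, mul_comm]

@[fun_prop]
theorem continuous_assocLegendrePos (l m : ℕ) : Continuous (assocLegendrePos l m) := by
  simp only [funext (assocLegendrePos_eq_eval l m)]
  exact (continuous_const.mul ((Real.continuous_rpow_const (by positivity)).comp
    (by fun_prop))).mul (Polynomial.continuous _)

@[fun_prop]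
theorem continuous_assocLegendre (l : ℕ) (m : ℤ) : Continuous (assocLegendre l m) := by
  unfold assocLegendre
  split_ifs <;> fun_prop

theorem intervalIntegral.integral_derivative_eval_mul_eval (P W : ℝ[X]) (a b : ℝ) :
    ∫ x in a..b, (derivative P).eval x * W.eval x
      = P.eval b * W.eval b - P.eval a * W.eval a
        - ∫ x in a..b, P.eval x * (derivative W).eval x := by
  have hibp := integral_mul_deriv_eq_deriv_mul (a := a) (b := b)
    (fun x _ => P.hasDerivAt x) (fun x _ => W.hasDerivAt x)
    ((Polynomial.continuous _).intervalIntegrable _ _)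
    ((Polynomial.continuous _).intervalIntegrable _ _)
  linarith

theorem intervalIntegral.integral_iterate_derivative_eval_mul_eval (k : ℕ) (P W : ℝ[X])
    {a b : ℝ}
    (hbdry : ∀ j < k, ∀ x ∈ ({a, b} : Set ℝ),
      (derivative^[k - 1 - j] P).eval x * (derivative^[j] W).eval x = 0) :
    ∫ x in a..b, (derivative^[k] P).eval x * W.eval x
      = (-1) ^ k * ∫ x in a..b, P.eval x * (derivative^[k] W).eval x := by
  induction k generalizing P W with
  | zero => simp
  | succ k ih =>
    have hbdry' : ∀ j < k, ∀ x ∈ ({a, b} : Set ℝ),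
        (derivative^[k - 1 - j] (derivative P)).eval x * (derivative^[j] W).eval x = 0 := by
      intro j hj x hx
      have := hbdry j (by omega) x hx
      rwa [show k + 1 - 1 - j = k - 1 - j + 1 by omega, Function.iterate_succ_apply] at this
    have ha := hbdry k (by omega) a (by simp)
    have hb := hbdry k (by omega) b (by simp)
    simp only [Nat.add_sub_cancel, Nat.sub_self, Function.iterate_zero, id_eq] at ha hb
    rw [Function.iterate_succ_apply, ih _ _ hbdry', integral_derivative_eval_mul_eval, ha, hb,
      ← Function.iterate_succ_apply' derivative]
    ring

theorem assocLegendrePos_mul_assocLegendrePos_of_mem_uIcc (l p m : ℕ) {x : ℝ}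
    (hx : x ∈ Set.uIcc (-1 : ℝ) 1) :
    assocLegendrePos l m x * assocLegendrePos p m x
      = (-1 : ℝ) ^ m / (2 ^ l * (l.factorial : ℝ)) *
          ((-1 : ℝ) ^ m / (2 ^ p * (p.factorial : ℝ))) *
        ((derivative^[p + m] ((X ^ 2 - 1 : ℝ[X]) ^ p)).eval x *
          ((1 - X ^ 2) ^ m * derivative^[l + m] ((X ^ 2 - 1 : ℝ[X]) ^ l)).eval x) := by
  rw [Set.uIcc_of_le (by norm_num)] at hx
  have hsq : (0 : ℝ) ≤ 1 - x ^ 2 := by nlinarith [hx.1, hx.2]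
  have hhalf : (1 - x ^ 2) ^ ((m : ℝ) / 2) * (1 - x ^ 2) ^ ((m : ℝ) / 2) = (1 - x ^ 2) ^ m := by
    rw [← Real.rpow_add_of_nonneg hsq (by positivity) (by positivity), add_halves,
      Real.rpow_natCast]
  simp only [assocLegendrePos_eq_eval, eval_mul, eval_pow, eval_sub, eval_one, eval_X, ← hhalf]
  ring

theorem integral_assocLegendrePos_mul_eq_zero {l p : ℕ} (m : ℕ) (hlp : l < p) :
    ∫ x in (-1 : ℝ)..1, assocLegendrePos l m x * assocLegendrePos p m x = 0 := by
  rcases lt_or_ge l m with hml | hml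
  · have hzero : ∀ x, assocLegendrePos l m x = 0 := fun x => by
      rw [assocLegendrePos_eq_eval, iterate_derivative_eq_zero
        (by rw [natDegree_X_sq_sub_one_pow]; omega)]
      simp
    simp [hzero]
  set W : ℝ[X] := (1 - X ^ 2) ^ m * derivative^[l + m] ((X ^ 2 - 1) ^ l)
  have hW_dvd : (X ^ 2 - 1 : ℝ[X]) ^ m ∣ W :=
    dvd_mul_of_dvd_left (pow_dvd_pow_of_dvd ⟨-1, by ring⟩ m) _
  have hW_natDegree : W.natDegree < p + m := by
    have h1 : ((1 - X ^ 2 : ℝ[X]) ^ m).natDegree = 2 * m := by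
      rw [natDegree_pow, show (1 - X ^ 2 : ℝ[X]) = -(X ^ 2 - C 1) by rw [C_1]; ring,
        natDegree_neg, natDegree_X_pow_sub_C, mul_comm]
    have h2 := natDegree_iterate_derivative ((X ^ 2 - 1 : ℝ[X]) ^ l) (l + m)
    rw [natDegree_X_sq_sub_one_pow] at h2
    refine natDegree_mul_le.trans_lt ?_
    omega
  have hvanish : ∀ {n : ℕ} {P : ℝ[X]}, n ≠ 0 → (X ^ 2 - 1 : ℝ[X]) ^ n ∣ P →
      ∀ x ∈ ({-1, 1} : Set ℝ), P.eval x = 0 := by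
    rintro n P hn hP x hx
    refine eval_eq_zero_of_dvd_of_eval_eq_zero hP ?_
    rcases hx with rfl | rfl <;> simp [hn]
  -- for `j < m` use `hW_dvd`; otherwise `(X² - 1)ᵖ` still vanishes to order `j - m + 1` at `±1`
  have hbdry : ∀ j < p + m, ∀ x ∈ ({-1, 1} : Set ℝ),
      (derivative^[p + m - 1 - j] ((X ^ 2 - 1 : ℝ[X]) ^ p)).eval x *
        (derivative^[j] W).eval x = 0 := by
    intro j hj x hx
    rcases lt_or_ge j m with hjm | hjm
    · rw [hvanish (n := m - j) (by omega) (pow_sub_dvd_iterate_derivative_of_pow_dvd j hW_dvd)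
        x hx, mul_zero]
    · rw [hvanish (n := p - (p + m - 1 - j)) (by omega)
        (pow_sub_dvd_iterate_derivative_pow _ _ _) x hx, zero_mul]
  rw [integral_congr fun x hx => assocLegendrePos_mul_assocLegendrePos_of_mem_uIcc l p m hx,
    intervalIntegral.integral_const_mul,
    intervalIntegral.integral_iterate_derivative_eval_mul_eval _ _ _ hbdry,
    iterate_derivative_eq_zero hW_natDegree]
  simp

theorem intervalIntegral.integral_comp_cos_mul_sin {G : ℝ → ℝ} (hG : Continuous G) :
    ∫ θ in (0 : ℝ)..π, G (Real.cos θ) * Real.sin θ = ∫ x in (-1 : ℝ)..1, G x := by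
  have hsub := integral_comp_mul_deriv (a := 0) (b := π) (f' := fun θ => -Real.sin θ)
    (fun θ _ => Real.hasDerivAt_cos θ) (by fun_prop) hG
  simp only [Function.comp_apply, mul_neg, intervalIntegral.integral_neg, Real.cos_zero,
    Real.cos_pi] at hsub
  rw [intervalIntegral.integral_symm 1, ← hsub, neg_neg]

theorem exists_assocLegendre_eq_mul_assocLegendrePos (l : ℕ) (m : ℤ) :
    ∃ c : ℝ, ∀ x, assocLegendre l m x = c * assocLegendrePos l m.natAbs x := by
  unfold assocLegendre
  split_ifs with hm
  · exact ⟨1, fun x => by rw [one_mul, show m.toNat = m.natAbs by omega]⟩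
  · exact ⟨_, fun x => by rw [show (-m).toNat = m.natAbs by omega]⟩

theorem integral_assocLegendre_cos_mul_eq_zero {l p : ℕ} {m q : ℤ} (hq : q.natAbs = m.natAbs)
    (hlp : l < p) :
    ∫ θ in (0 : ℝ)..π,
      assocLegendre l m (Real.cos θ) * assocLegendre p q (Real.cos θ) * Real.sin θ = 0 := by
  obtain ⟨c₁, h₁⟩ := exists_assocLegendre_eq_mul_assocLegendrePos l m
  obtain ⟨c₂, h₂⟩ := exists_assocLegendre_eq_mul_assocLegendrePos p q
  simp only [h₁, h₂, hq]
  have hcont : Continuous fun x =>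
      c₁ * assocLegendrePos l m.natAbs x * (c₂ * assocLegendrePos p m.natAbs x) := by fun_prop
  rw [intervalIntegral.integral_comp_cos_mul_sin hcont]
  simp only [mul_mul_mul_comm, intervalIntegral.integral_const_mul,
    integral_assocLegendrePos_mul_eq_zero _ hlp, mul_zero]

theorem integral_exp_I_mul_int_mul (k : ℤ) :
    ∫ φ in (0 : ℝ)..2 * π, Complex.exp (Complex.I * k * φ) = if k = 0 then 2 * π else 0 := by
  split_ifs with hk
  · simp [hk]
  have hc : Complex.I * k ≠ 0 := by simp [Complex.I_ne_zero, hk]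
  rw [integral_exp_mul_complex hc, Complex.ofReal_mul, Complex.ofReal_ofNat,
    show Complex.I * k * (2 * π) = k * (2 * π * Complex.I) by ring,
    Complex.exp_int_mul_two_pi_mul_I]
  simp

theorem conj_sphHarm_mul_conj_sphHarm (l : ℕ) (m : ℤ) (p : ℕ) (q : ℤ) (θ φ : ℝ) :
    conj (sphHarm l m θ φ) * conj (sphHarm p q θ φ)
      = ((shNorm l m * shNorm p q *
          (assocLegendre l m (Real.cos θ) * assocLegendre p q (Real.cos θ)) : ℝ) : ℂ) *
        Complex.exp (Complex.I * ((-(m + q) : ℤ) : ℂ) * φ) := by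
  simp only [sphHarm, map_mul, Complex.conj_ofReal, ← Complex.exp_conj, Complex.conj_I,
    map_intCast]
  rw [mul_mul_mul_comm, ← Complex.exp_add]
  push_cast
  ring_nf

theorem continuous_sphHarm (l : ℕ) (m : ℤ) :
    Continuous fun x : ℝ × ℝ => sphHarm l m x.1 x.2 := by
  unfold sphHarm
  fun_prop

theorem continuous_sphHarmIdx (n : ℕ) : Continuous fun x : ℝ × ℝ => sphHarmIdx n x.1 x.2 :=
  continuous_sphHarm _ _

theorem shc_finsetSum {ι : Type*} (s : Finset ι) (F : ι → ℝ → ℝ → ℂ)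
    (hF : ∀ i ∈ s, Continuous fun x : ℝ × ℝ => F i x.1 x.2) (l : ℕ) (m : ℤ) :
    shc (fun θ φ => ∑ i ∈ s, F i θ φ) l m = ∑ i ∈ s, shc (F i) l m := by
  have hcont : ∀ i ∈ s, Continuous fun x : ℝ × ℝ => F i x.1 x.2 * conj (sphHarm l m x.1 x.2) :=
    fun i hi => (hF i hi).mul (Complex.continuous_conj.comp (continuous_sphHarm l m))
  have hinner : ∀ θ, ∫ φ in (0 : ℝ)..2 * π, ∑ i ∈ s, F i θ φ * conj (sphHarm l m θ φ)
      = ∑ i ∈ s, ∫ φ in (0 : ℝ)..2 * π, F i θ φ * conj (sphHarm l m θ φ) := fun θ =>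
    intervalIntegral.integral_finsetSum fun i hi =>
      ((hcont i hi).comp (Continuous.prodMk_right θ)).intervalIntegrable _ _
  simp only [shc, Finset.sum_mul, hinner]
  refine intervalIntegral.integral_finsetSum fun i hi => Continuous.intervalIntegrable ?_ _ _
  exact (intervalIntegral.continuous_parametric_intervalIntegral_of_continuous'
    (μ := volume) (hcont i hi) 0 (2 * π)).mul (by fun_prop)

theorem shc_const_mul (a : ℂ) (F : ℝ → ℝ → ℂ) (l : ℕ) (m : ℤ) :
    shc (fun θ φ => a * F θ φ) l m = a * shc F l m := by
  simp only [shc, mul_assoc, intervalIntegral.integral_const_mul]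

theorem shc_conj_sphHarm_eq_zero {l p : ℕ} (m q : ℤ) (hlp : l < p) :
    shc (fun θ φ => conj (sphHarm l m θ φ)) p q = 0 := by
  simp only [shc, conj_sphHarm_mul_conj_sphHarm, intervalIntegral.integral_const_mul,
    integral_exp_I_mul_int_mul]
  split_ifs with hmq
  · have hq : q.natAbs = m.natAbs := by omega
    calc _ = ((shNorm l m * shNorm p q * (2 * π) : ℝ) : ℂ) * ((∫ θ in (0 : ℝ)..π,
            assocLegendre l m (Real.cos θ) * assocLegendre p q (Real.cos θ) * Real.sin θ : ℝ) :
              ℂ) := by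
          rw [← intervalIntegral.integral_ofReal, ← intervalIntegral.integral_const_mul]
          refine intervalIntegral.integral_congr fun θ _ => ?_
          push_cast
          ring
      _ = 0 := by rw [integral_assocLegendre_cos_mul_eq_zero hq hlp, Complex.ofReal_zero, mul_zero]
  · simp

theorem deg_le_of_le_sq_add_two_mul {L r : ℕ} (hr : r ≤ L ^ 2 + 2 * L) : deg r ≤ L :=
  Nat.lt_succ_iff.mp (Nat.sqrt_lt'.mpr (by nlinarith))

theorem shc_sum_mul_conj_sphHarmIdx_eq_zero (L : ℕ) (a : ℕ → ℂ) {p : ℕ} (q : ℤ) (hp : L < p) :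
    shc (fun θ φ => ∑ r ∈ Finset.range (L ^ 2 + 2 * L + 1), a r * conj (sphHarmIdx r θ φ)) p q
      = 0 := by
  rw [shc_finsetSum _ _ fun r _ => continuous_const.mul
    (Complex.continuous_conj.comp (continuous_sphHarmIdx r))]
  refine Finset.sum_eq_zero fun r hr => ?_
  have hdeg : deg r < p :=
    (deg_le_of_le_sq_add_two_mul (Nat.lt_succ_iff.mp (Finset.mem_range.mp hr))).trans_lt hp
  rw [shc_const_mul]
  exact mul_eq_zero_of_right _ (shc_conj_sphHarm_eq_zero _ _ hdeg)

theorem shc_sum_mul_sum_sphHarmIdx (s t : Finset ℕ) (a b : ℕ → ℂ) (n : ℕ) :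
    shc (fun θ φ => (∑ r ∈ s, a r * sphHarmIdx r θ φ) * ∑ c ∈ t, b c * sphHarmIdx c θ φ)
      (deg n) (ord n) = ∑ r ∈ s, ∑ c ∈ t, a r * b c * tripleProd c r n := by
  have hcont : ∀ r c, Continuous fun x : ℝ × ℝ =>
      a r * sphHarmIdx r x.1 x.2 * (b c * sphHarmIdx c x.1 x.2) := fun r c =>
    (continuous_const.mul (continuous_sphHarmIdx r)).mul
      (continuous_const.mul (continuous_sphHarmIdx c))
  simp only [Finset.sum_mul_sum]
  rw [shc_finsetSum _ _ fun r _ => continuous_finsetSum _ fun c _ => hcont r c]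
  refine Finset.sum_congr rfl fun r _ => ?_
  rw [shc_finsetSum _ _ fun c _ => hcont r c]
  refine Finset.sum_congr rfl fun c _ => ?_
  simp only [mul_mul_mul_comm (a r), shc_const_mul, tripleProd]

/-- The SLSHT distribution component of a band-limited signal
`f = ∑_c f_c Y_c` (degree ≤ `Lf`), computed with an azimuthally symmetric
band-limited window with zonal coefficients `h⁰_p` (degree ≤ `Lh`), satisfies
`g_f(ŷ; n) = ∑_c f_c ψ_{n,c}(ŷ)` with
`ψ_{n,c}(ŷ) = ∑_{r=0}^{N_h} √(4π/(2p+1)) conj(Y_p^q(ŷ)) h_p⁰ T(c;r;n)`,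
`(p,q) ↔ r`; in particular each `g_f(·; n)` is band-limited with maximum spectral
degree `Lh`, the band-limit of the window. -/
theorem slsht_component_expansion (Lf Lh : ℕ) (fc h0 : ℕ → ℂ) :
    let Nf := Lf ^ 2 + 2 * Lf
    let Nh := Lh ^ 2 + 2 * Lh
    let f : ℝ → ℝ → ℂ := fun θ φ => ∑ c ∈ Finset.range (Nf + 1), fc c * sphHarmIdx c θ φ
    -- rotated window `(D(ŷ)h)(x̂)`, expanded in spherical harmonics
    let Dh : ℝ → ℝ → ℝ → ℝ → ℂ := fun ϑ φ₀ θ φ =>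
      ∑ r ∈ Finset.range (Nh + 1),
        ((Real.sqrt (4 * π / (2 * deg r + 1)) : ℝ) : ℂ) * conj (sphHarmIdx r ϑ φ₀) *
          h0 (deg r) * sphHarmIdx r θ φ
    -- SLSHT distribution component `g_f(ŷ; n)`
    let g : ℝ → ℝ → ℕ → ℂ := fun ϑ φ₀ n =>
      shc (fun θ φ => Dh ϑ φ₀ θ φ * f θ φ) (deg n) (ord n)
    let ψ : ℕ → ℕ → ℝ → ℝ → ℂ := fun n c ϑ φ₀ =>
      ∑ r ∈ Finset.range (Nh + 1),
        ((Real.sqrt (4 * π / (2 * deg r + 1)) : ℝ) : ℂ) * conj (sphHarmIdx r ϑ φ₀) *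
          h0 (deg r) * tripleProd c r n
    (∀ (ϑ φ₀ : ℝ) (n : ℕ), g ϑ φ₀ n = ∑ c ∈ Finset.range (Nf + 1), fc c * ψ n c ϑ φ₀) ∧
    (∀ (n : ℕ) (p : ℕ) (q : ℤ), Lh < p → shc (fun ϑ φ₀ => g ϑ φ₀ n) p q = 0) := by
  intro Nf Nh f Dh g ψ
  have hexpand : ∀ ϑ φ₀ n, g ϑ φ₀ n = ∑ c ∈ Finset.range (Nf + 1), fc c * ψ n c ϑ φ₀ := by
    intro ϑ φ₀ n
    refine (shc_sum_mul_sum_sphHarmIdx _ _ _ fc n).trans ?_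
    rw [Finset.sum_comm]
    simp only [ψ, Finset.mul_sum]
    exact Finset.sum_congr rfl fun c _ => Finset.sum_congr rfl fun r _ => by ring
  refine ⟨hexpand, fun n p q hp => ?_⟩
  have hwindow : (fun ϑ φ₀ => g ϑ φ₀ n) = fun ϑ φ₀ => ∑ r ∈ Finset.range (Nh + 1),
      (∑ c ∈ Finset.range (Nf + 1), fc c * ((Real.sqrt (4 * π / (2 * deg r + 1)) : ℝ) : ℂ) *
        h0 (deg r) * tripleProd c r n) * conj (sphHarmIdx r ϑ φ₀) := by
    funext ϑ φ₀
    simp only [hexpand, ψ, Finset.mul_sum, Finset.sum_mul]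
    rw [Finset.sum_comm]
    exact Finset.sum_congr rfl fun r _ => Finset.sum_congr rfl fun c _ => by ring
  rw [hwindow]
  exact shc_sum_mul_conj_sphHarmIdx_eq_zero Lh _ q hp

end
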